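/- For all z ∈ (0,1), 2 log 2 ≤ g(z) ≤ 2 where g(z) = (1/√(1-z²)) log((1+√(1-z²))/(1-√(1-z²))) + 2 log z. -/

import Mathlib

/-- `g(z) = (1/√(1−z²)) log((1+√(1−z²))/(1−√(1−z²))) + 2 log z`. -/
noncomputable def gPaper (z : ℝ) : ℝ :=
  (1 / Real.sqrt (1 - z ^ 2)) *
      Real.log ((1 + Real.sqrt (1 - z ^ 2)) / (1 - Real.sqrt (1 - z ^ 2))) +
    2 * Real.log z

noncomputable def phiAux (t : ℝ) : ℝ :=
  (1 + t) * Real.log (1 + t) - (1 - t) * Real.log (1 - t)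

lemma hasDerivAt_phiAux {t : ℝ} (h1 : -1 < t) (h2 : t < 1) :
    HasDerivAt phiAux (Real.log (1 + t) + Real.log (1 - t) + 2) t := by
  have hA : HasDerivAt (fun t : ℝ => (1 + t) * Real.log (1 + t))
      ((Real.log (1 + t) + 1) * 1) t := by
    have := (Real.hasDerivAt_mul_log (x := 1 + t) (by linarith)).comp t
      ((hasDerivAt_id t).const_add 1)
    simpa [Function.comp_def] using this
  have hB : HasDerivAt (fun t : ℝ => (1 - t) * Real.log (1 - t))
      ((Real.log (1 - t) + 1) * (-1)) t := by
    have := (Real.hasDerivAt_mul_log (x := 1 - t) (by linarith)).comp t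
      ((hasDerivAt_id t).const_sub 1)
    simpa [Function.comp_def] using this
  have := hA.sub hB
  exact this.congr_deriv (by ring)

lemma continuousOn_phiAux : ContinuousOn phiAux (Set.Icc 0 1) := by
  have h := Real.continuous_mul_log
  have h1 : Continuous fun t : ℝ => (1 + t) * Real.log (1 + t) :=
    h.comp (continuous_const.add continuous_id)
  have h2 : Continuous fun t : ℝ => (1 - t) * Real.log (1 - t) :=
    h.comp (continuous_const.sub continuous_id)
  exact (h1.sub h2).continuousOn

lemma phiAux_le {s : ℝ} (h0 : 0 < s) (h1 : s < 1) : phiAux s ≤ 2 * s := by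
  have hmono : StrictMonoOn (fun t : ℝ => 2 * t - phiAux t) (Set.Icc 0 1) := by
    apply strictMonoOn_of_deriv_pos (convex_Icc 0 1)
    · exact ((continuous_const.mul continuous_id).continuousOn).sub continuousOn_phiAux
    · intro x hx
      rw [interior_Icc] at hx
      have hd : HasDerivAt (fun t : ℝ => 2 * t - phiAux t)
          (2 * 1 - (Real.log (1 + x) + Real.log (1 - x) + 2)) x :=
        ((hasDerivAt_id x).const_mul 2).sub (hasDerivAt_phiAux (by linarith [hx.1]) hx.2)
      rw [hd.deriv]
      have hmul : Real.log (1 + x) + Real.log (1 - x) = Real.log ((1 + x) * (1 - x)) :=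
        (Real.log_mul (by nlinarith [hx.1, hx.2]) (by nlinarith [hx.2])).symm
      have hlt : Real.log ((1 + x) * (1 - x)) < 0 := by
        apply Real.log_neg <;> nlinarith [hx.1, hx.2]
      linarith [hmul ▸ hlt]
  have h := hmono (Set.mem_Icc.mpr ⟨le_rfl, zero_le_one⟩)
    (Set.mem_Icc.mpr ⟨h0.le, h1.le⟩) h0
  simp only [phiAux, mul_zero, sub_zero] at h
  simp only [add_zero, sub_zero, Real.log_one, mul_zero, sub_self] at h
  simp only [phiAux]
  linarith

lemma phiAux_ge {s : ℝ} (h0 : 0 < s) (h1 : s < 1) : 2 * Real.log 2 * s ≤ phiAux s := by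
  have hconc : StrictConcaveOn ℝ (Set.Icc (0:ℝ) 1) phiAux := by
    apply strictConcaveOn_of_deriv2_neg (convex_Icc 0 1) continuousOn_phiAux
    intro x hx
    rw [interior_Icc] at hx
    have hx0 : (0:ℝ) < x := hx.1
    have hx1 : x < 1 := hx.2
    have heq : deriv phiAux =ᶠ[nhds x]
        fun t => Real.log (1 + t) + Real.log (1 - t) + 2 := by
      filter_upwards [isOpen_Ioo.mem_nhds (show x ∈ Set.Ioo (-1:ℝ) 1 from ⟨by linarith, hx1⟩)]
        with t ht
      exact (hasDerivAt_phiAux ht.1 ht.2).deriv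
    simp only [Function.iterate_succ_apply', Function.iterate_zero_apply]
    rw [heq.deriv_eq]
    have hd : HasDerivAt (fun t : ℝ => Real.log (1 + t) + Real.log (1 - t) + 2)
        ((1 + x)⁻¹ * 1 + (1 - x)⁻¹ * (-1)) x := by
      have hA := (Real.hasDerivAt_log (x := 1 + x) (by linarith)).comp x
        ((hasDerivAt_id x).const_add 1)
      have hB := (Real.hasDerivAt_log (x := 1 - x) (by linarith)).comp x
        ((hasDerivAt_id x).const_sub 1)
      exact ((hA.add hB).add_const 2 : HasDerivAt _ _ x)
    rw [hd.deriv]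
    have hlt : (1 + x)⁻¹ < (1 - x)⁻¹ := by
      apply inv_strictAnti₀ (by linarith) (by linarith)
    nlinarith [hlt]
  have hc := hconc.concaveOn.2 (Set.mem_Icc.mpr ⟨le_rfl, zero_le_one⟩)
    (Set.mem_Icc.mpr ⟨zero_le_one, le_rfl⟩)
    (show (0:ℝ) ≤ 1 - s by linarith) h0.le (by ring)
  simp only [smul_eq_mul, mul_zero, mul_one, zero_add] at hc
  have hphi0 : phiAux 0 = 0 := by simp [phiAux]
  have hphi1 : phiAux 1 = 2 * Real.log 2 := by
    norm_num [phiAux]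
  rw [hphi0, hphi1] at hc
  linarith

theorem gPaper_bounds {z : ℝ} (hz : z ∈ Set.Ioo (0 : ℝ) 1) :
    2 * Real.log 2 ≤ gPaper z ∧ gPaper z ≤ 2 := by
  obtain ⟨hz0, hz1⟩ := hz
  have h1z : 0 < 1 - z ^ 2 := by nlinarith
  set s := Real.sqrt (1 - z ^ 2) with hs_def
  have hs0 : 0 < s := Real.sqrt_pos.mpr h1z
  have hs2 : s ^ 2 = 1 - z ^ 2 := Real.sq_sqrt h1z.le
  have hs1 : s < 1 := by nlinarith
  have hz2 : z ^ 2 = (1 + s) * (1 - s) := by nlinarith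
  have hlogz : 2 * Real.log z = Real.log (1 + s) + Real.log (1 - s) := by
    have : Real.log (z ^ 2) = 2 * Real.log z := by
      rw [Real.log_pow]; push_cast; ring
    rw [← this, hz2, Real.log_mul (by linarith) (by linarith)]
  have hlogdiv : Real.log ((1 + s) / (1 - s)) = Real.log (1 + s) - Real.log (1 - s) :=
    Real.log_div (by linarith) (by linarith)
  have hg : gPaper z = phiAux s / s := by
    rw [gPaper, phiAux, ← hs_def, hlogdiv, hlogz]
    field_simp
    ring
  constructor
  · rw [hg, le_div_iff₀ hs0]
    exact phiAux_ge hs0 hs1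
  · rw [hg, div_le_iff₀ hs0]
    have := phiAux_le hs0 hs1
    linarith
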